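/- Let ψ : ℝ → ℝ be a smooth, even, nonnegative function supported in [−1,1], equal to 1 on [−1/4,1/4], nonincreasing on [0,∞), with ∫_ℝ ψ(x)dx = 1, and ψ̂(η) = (2π)^{−1/2} ∫_ℝ ψ(x)e^{−ixη}dx. For a, b > 0 define χ^{a,b}(z) = (2π)^{−1/2} ∫_ℝ (1/√a) ψ̂(y/√a) e^{−(√b z − y)²/2} dy. Then there exists s₀ ∈ (0,1) such that for all s ∈ (0,s₀) and all z ∈ ℝ: |χ^{s,1/s}(z)| ≤ 2. -/

import Mathlib

open MeasureTheory

private lemma gauss_inner (c t : ℝ) :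
    ∫ y : ℝ, Complex.exp (-(Complex.I) * t * y) * (Real.exp (-(c - y)^2 / 2) : ℂ)
      = (Real.sqrt (2*Real.pi) : ℂ) * Complex.exp (-(Complex.I)*c*t - t^2/2) := by
  have h : ∀ y : ℝ, Complex.exp (-(Complex.I) * t * y) * (Real.exp (-(c - y)^2 / 2) : ℂ)
      = Complex.exp ((-(1/2) : ℂ) * y^2 + ((c : ℂ) - Complex.I * t) * y + (-(c:ℂ)^2/2)) := by
    intro y
    rw [Complex.ofReal_exp, ← Complex.exp_add]
    congr 1
    push_cast
    ring
  simp_rw [h]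
  rw [integral_cexp_quadratic (by norm_num : ((-(1/2) : ℂ)).re < 0)]
  have h2 : ((Real.pi : ℂ) / -(-(1/2))) = ((2 * Real.pi : ℝ) : ℂ) := by push_cast; ring
  rw [h2]
  have h3 : ((2 * Real.pi : ℝ) : ℂ) ^ (1/2 : ℂ) = ((Real.sqrt (2*Real.pi) : ℝ) : ℂ) := by
    rw [Real.sqrt_eq_rpow, Complex.ofReal_cpow (by positivity : (0:ℝ) ≤ 2*Real.pi)]
    norm_num
  rw [h3]
  congr 1
  field_simp
  ring_nf
  rw [Complex.I_sq]
  ring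

private lemma gauss_shift_integrable (c : ℝ) :
    Integrable (fun y : ℝ => Real.exp (-(c - y)^2 / 2)) := by
  have h : (fun y : ℝ => Real.exp (-(c - y)^2 / 2))
      = fun y : ℝ => Real.exp (-(2⁻¹:ℝ) * (y - c)^2) := by
    funext y; congr 1; ring
  rw [h]
  exact (integrable_exp_neg_mul_sq (by norm_num)).comp_sub_right c

/-- There is s₀ ∈ (0,1) such that |χ^{s,1/s}(z)| ≤ 2 for all s ∈ (0,s₀) and all z
(the domination claim in the proof of Theorem 4.2 of the paper). -/
theorem stmt9
    (ψ : ℝ → ℝ)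
    (hψ_smooth : ContDiff ℝ (⊤ : ℕ∞) ψ)
    (hψ_even : ∀ x, ψ (-x) = ψ x)
    (hψ_nonneg : ∀ x, 0 ≤ ψ x)
    (hψ_supp : ∀ x : ℝ, 1 < |x| → ψ x = 0)
    (hψ_one : ∀ x : ℝ, |x| ≤ 1/4 → ψ x = 1)
    (hψ_anti : AntitoneOn ψ (Set.Ici 0))
    (hψ_int : ∫ x : ℝ, ψ x = 1)
    (ψhat : ℝ → ℂ)
    (hψhat : ∀ η : ℝ, ψhat η = (((2 * Real.pi) ^ (-(1:ℝ)/2) : ℝ) : ℂ) *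
        ∫ x : ℝ, (ψ x : ℂ) * Complex.exp (-(Complex.I) * (x : ℂ) * (η : ℂ)))
    (χ : ℝ → ℝ → ℝ → ℂ)
    (hχ : ∀ a b z : ℝ, χ a b z = (((2 * Real.pi) ^ (-(1:ℝ)/2) : ℝ) : ℂ) *
        ∫ y : ℝ, ((1 / Real.sqrt a : ℝ) : ℂ) * ψhat (y / Real.sqrt a) *
          (Real.exp (-(Real.sqrt b * z - y)^2 / 2) : ℂ)) :
    ∃ s₀ : ℝ, 0 < s₀ ∧ s₀ < 1 ∧ ∀ s : ℝ, 0 < s → s < s₀ → ∀ z : ℝ,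
      ‖χ s (1/s) z‖ ≤ 2 := by
  -- basic facts about ψ
  have hψ_cont : Continuous ψ := hψ_smooth.continuous
  have hψ_le_one : ∀ x, ψ x ≤ 1 := by
    intro x
    have h0 : ψ 0 = 1 := hψ_one 0 (by norm_num)
    rcases le_or_gt 0 x with hx | hx
    · calc ψ x ≤ ψ 0 := hψ_anti (Set.mem_Ici.mpr le_rfl) (Set.mem_Ici.mpr hx) hx
        _ = 1 := h0
    · rw [← hψ_even x]
      calc ψ (-x) ≤ ψ 0 := hψ_anti (Set.mem_Ici.mpr le_rfl)
            (Set.mem_Ici.mpr (by linarith)) (by linarith)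
        _ = 1 := h0
  have hψ_cs : HasCompactSupport ψ := by
    apply HasCompactSupport.intro (isCompact_Icc : IsCompact (Set.Icc (-1:ℝ) 1))
    intro x hx
    apply hψ_supp
    simp only [Set.mem_Icc, not_and_or, not_le] at hx
    rcases hx with h | h
    · rw [abs_of_neg (by linarith)]; linarith
    · rw [abs_of_pos (by linarith)]; linarith
  have hψ_integrable : Integrable ψ := hψ_cont.integrable_of_hasCompactSupport hψ_cs
  refine ⟨1/2, by norm_num, by norm_num, ?_⟩
  intro s hs0 _ z
  have ha : (0:ℝ) < Real.sqrt s := Real.sqrt_pos.mpr hs0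
  set C : ℝ := (2 * Real.pi) ^ (-(1:ℝ)/2) with hC_def
  set K : ℝ := Real.sqrt (2 * Real.pi) with hK_def
  have hK : 0 < K := Real.sqrt_pos.mpr (by positivity)
  have hCK : C = K⁻¹ := by
    rw [hC_def, hK_def, Real.sqrt_eq_rpow,
      show (-(1:ℝ)/2) = -(1/2:ℝ) by norm_num,
      Real.rpow_neg (by positivity : (0:ℝ) ≤ 2*Real.pi)]
  have hC : 0 < C := by rw [hCK]; positivity
  set G : ℝ → ℝ → ℂ := fun y x =>
    (ψ x : ℂ) * Complex.exp (-(Complex.I) * (x : ℂ) * ((y / Real.sqrt s : ℝ) : ℂ)) *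
      (Real.exp (-(Real.sqrt (1/s) * z - y)^2 / 2) : ℂ) with hG_def
  have hG_norm : ∀ y x, ‖G y x‖ = Real.exp (-(Real.sqrt (1/s) * z - y)^2 / 2) * ψ x := by
    intro y x
    have h1 : -(Complex.I) * (x : ℂ) * ((y / Real.sqrt s : ℝ) : ℂ)
        = ((-(x * (y/Real.sqrt s)) : ℝ) : ℂ) * Complex.I := by push_cast; ring
    rw [hG_def]
    simp only [norm_mul, h1, Complex.norm_exp_ofReal_mul_I, Complex.norm_real,
      Real.norm_eq_abs, abs_of_nonneg (hψ_nonneg x), abs_of_nonneg (Real.exp_nonneg _)]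
    ring
  have hG_int : Integrable (Function.uncurry G) (volume.prod volume) := by
    have hbound : Integrable (fun p : ℝ × ℝ =>
        Real.exp (-(Real.sqrt (1/s) * z - p.1)^2 / 2) * ψ p.2) (volume.prod volume) :=
      (gauss_shift_integrable _).mul_prod hψ_integrable
    apply Integrable.mono' hbound
    · apply Continuous.aestronglyMeasurable
      apply Continuous.mul
      apply Continuous.mul
      · exact Complex.continuous_ofReal.comp (hψ_cont.comp continuous_snd)
      · exact Complex.continuous_exp.comp (by fun_prop)
      · exact Complex.continuous_ofReal.comp (by fun_prop)
    · filter_upwards with p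
      rw [Function.uncurry, hG_norm p.1 p.2]
  have hstep : χ s (1/s) z = (C : ℂ) *
      ∫ y : ℝ, ((C / Real.sqrt s : ℝ) : ℂ) * ∫ x : ℝ, G y x := by
    rw [hχ]
    congr 1
    apply integral_congr_ae
    filter_upwards with y
    rw [hψhat]
    simp only [hG_def]
    conv_rhs => rw [integral_mul_const]
    push_cast
    ring
  rw [hstep, integral_const_mul, integral_integral_swap hG_int]
  have hinner : ∀ x : ℝ, (∫ y : ℝ, G y x)
      = (ψ x : ℂ) * ((Real.sqrt (2*Real.pi) : ℂ) *
        Complex.exp (-(Complex.I)*(Real.sqrt (1/s) * z : ℝ)*((x/Real.sqrt s : ℝ):ℂ)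
          - ((x/Real.sqrt s : ℝ):ℂ)^2/2)) := by
    intro x
    have harg : ∀ y : ℝ, -(Complex.I) * (x : ℂ) * ((y / Real.sqrt s : ℝ) : ℂ)
        = -(Complex.I) * ((x / Real.sqrt s : ℝ) : ℂ) * (y : ℂ) := by
      intro y; push_cast; ring
    have h1 : ∀ y : ℝ, G y x = (ψ x : ℂ) *
        (Complex.exp (-(Complex.I) * ((x/Real.sqrt s : ℝ) : ℂ) * (y : ℂ)) *
          (Real.exp (-(Real.sqrt (1/s) * z - y)^2 / 2) : ℂ)) := by
      intro y
      simp only [hG_def]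
      rw [harg y]
      ring
    simp_rw [h1]
    rw [integral_const_mul, gauss_inner (Real.sqrt (1/s) * z) (x/Real.sqrt s)]
  simp_rw [hinner]
  have hmaj : Integrable (fun x : ℝ => K * Real.exp (-(x/Real.sqrt s)^2/2)) := by
    apply Integrable.const_mul
    have h : (fun x : ℝ => Real.exp (-(x/Real.sqrt s)^2/2))
        = fun x : ℝ => Real.exp (-(1/(2*(Real.sqrt s)^2)) * x^2) := by
      funext x; congr 1; ring
    rw [h]
    exact integrable_exp_neg_mul_sq (by positivity)
  have hbound : ‖∫ x : ℝ, (ψ x : ℂ) * ((Real.sqrt (2*Real.pi) : ℂ) *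
      Complex.exp (-(Complex.I)*(Real.sqrt (1/s) * z : ℝ)*((x/Real.sqrt s : ℝ):ℂ)
        - ((x/Real.sqrt s : ℝ):ℂ)^2/2))‖
      ≤ ∫ x : ℝ, K * Real.exp (-(x/Real.sqrt s)^2/2) := by
    apply norm_integral_le_of_norm_le hmaj
    filter_upwards with x
    have harg : (-(Complex.I)*((Real.sqrt (1/s) * z : ℝ):ℂ)*((x/Real.sqrt s : ℝ):ℂ)
        - ((x/Real.sqrt s : ℝ):ℂ)^2/2)
        = (((-(x/Real.sqrt s)^2/2 : ℝ)) : ℂ) +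
          ((-((Real.sqrt (1/s) * z) * (x/Real.sqrt s)) : ℝ) : ℂ) * Complex.I := by
      push_cast; ring
    have hx1 : ‖Complex.exp (-(Complex.I)*((Real.sqrt (1/s) * z : ℝ):ℂ)*((x/Real.sqrt s : ℝ):ℂ)
        - ((x/Real.sqrt s : ℝ):ℂ)^2/2)‖ = Real.exp (-(x/Real.sqrt s)^2/2) := by
      rw [harg, Complex.exp_add, norm_mul, Complex.norm_exp_ofReal_mul_I, mul_one,
        ← Complex.ofReal_exp, Complex.norm_real, Real.norm_eq_abs,
        abs_of_pos (Real.exp_pos _)]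
    rw [norm_mul, norm_mul, hx1, Complex.norm_real, Complex.norm_real,
      Real.norm_eq_abs, Real.norm_eq_abs, abs_of_nonneg (hψ_nonneg x),
      abs_of_nonneg (Real.sqrt_nonneg _)]
    calc ψ x * (Real.sqrt (2*Real.pi) * Real.exp (-(x/Real.sqrt s)^2/2))
        ≤ 1 * (Real.sqrt (2*Real.pi) * Real.exp (-(x/Real.sqrt s)^2/2)) := by
          apply mul_le_mul_of_nonneg_right (hψ_le_one x) (by positivity)
      _ = K * Real.exp (-(x/Real.sqrt s)^2/2) := by rw [one_mul, hK_def]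
  have hgauss : (∫ x : ℝ, K * Real.exp (-(x/Real.sqrt s)^2/2)) = K * (K * Real.sqrt s) := by
    rw [integral_const_mul]
    congr 1
    have h : (fun x : ℝ => Real.exp (-(x/Real.sqrt s)^2/2))
        = fun x : ℝ => Real.exp (-(1/(2*(Real.sqrt s)^2)) * x^2) := by
      funext x; congr 1; ring
    rw [h, integral_gaussian]
    rw [show Real.pi / (1/(2*(Real.sqrt s)^2)) = (2*Real.pi) * (Real.sqrt s)^2 by
      field_simp]
    rw [Real.sqrt_mul (by positivity), Real.sqrt_sq ha.le, hK_def]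
  rw [norm_mul, norm_mul, Complex.norm_real, Complex.norm_real,
    Real.norm_eq_abs, Real.norm_eq_abs, abs_of_nonneg hC.le,
    abs_of_nonneg (div_nonneg hC.le (Real.sqrt_nonneg s))]
  calc C * (C / Real.sqrt s * ‖∫ x : ℝ, (ψ x : ℂ) * ((Real.sqrt (2*Real.pi) : ℂ) *
        Complex.exp (-(Complex.I)*(Real.sqrt (1/s) * z : ℝ)*((x/Real.sqrt s : ℝ):ℂ)
          - ((x/Real.sqrt s : ℝ):ℂ)^2/2))‖)
      ≤ C * (C / Real.sqrt s * (K * (K * Real.sqrt s))) := by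
        apply mul_le_mul_of_nonneg_left _ hC.le
        apply mul_le_mul_of_nonneg_left _ (div_nonneg hC.le (Real.sqrt_nonneg s))
        rw [← hgauss]; exact hbound
    _ = 1 := by rw [hCK]; field_simp
    _ ≤ 2 := by norm_num
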